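/- arXiv:2301.08672 — 4 statements merged into one kernel-verified Lean document; each statement's English description precedes it below -/
import Mathlib

section
/- The abelianization functor Ab : XMod → XMod, sending (N₁, N₂, ∂) to (N₁/[N₂,N₁], N₂/[N₂,N₂]) with the induced connecting homomorphism and action and with coaugmentation the canonical quotient maps, is admissible for the class of regular epimorphisms. -/
set_option linter.unusedVariables false

/-- A crossed module of groups `(M, G, d)` with `G` acting on `M`. -/
structure XMod : Type 1 where
  M : Type
  G : Type
  [grpM : Group M]
  [grpG : Group G]
  act : G →* MulAut M
  d : M →* G
  act_d : ∀ (b : G) (t : M), d (act b t) = b * d t * b⁻¹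
  peiffer : ∀ (t s : M), act (d t) s = t * s * t⁻¹

attribute [instance] XMod.grpM XMod.grpG

/-- A morphism of crossed modules. -/
structure XModHom (N T : XMod) where
  f1 : N.M →* T.M
  f2 : N.G →* T.G
  comm_d : ∀ n, T.d (f1 n) = f2 (N.d n)
  equiv : ∀ (b : N.G) (n : N.M), f1 (N.act b n) = T.act (f2 b) (f1 n)

namespace XModHom

theorem ext {N T : XMod} {f g : XModHom N T} (h1 : f.f1 = g.f1) (h2 : f.f2 = g.f2) :
    f = g := by
  cases f; cases g; cases h1; cases h2; rfl

/-- The identity morphism. -/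
def id (T : XMod) : XModHom T T :=
  ⟨MonoidHom.id _, MonoidHom.id _, fun _ => rfl, fun _ _ => rfl⟩

/-- Composition of morphisms of crossed modules. -/
def comp {A B C : XMod} (g : XModHom B C) (f : XModHom A B) : XModHom A C where
  f1 := g.f1.comp f.f1
  f2 := g.f2.comp f.f2
  comm_d := by intro n; simp [MonoidHom.comp_apply, g.comm_d, f.comm_d]
  equiv := by intro b n; simp [MonoidHom.comp_apply, f.equiv, g.equiv]

/-- The trivial morphism of crossed modules. -/
def triv (A B : XMod) : XModHom A B where
  f1 := 1
  f2 := 1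
  comm_d := by intro n; simp
  equiv := by intro b n; simp

/-- A morphism of crossed modules is an isomorphism if it has a two-sided inverse. -/
def IsIso {A B : XMod} (f : XModHom A B) : Prop :=
  ∃ g : XModHom B A, comp g f = id A ∧ comp f g = id B

/-- Regular epimorphisms of crossed modules are exactly the componentwise
surjective morphisms. -/
def RegEpi {A B : XMod} (f : XModHom A B) : Prop :=
  Function.Surjective f.f1 ∧ Function.Surjective f.f2

/-- `κ` is a kernel of `α` (in the categorical sense). -/
def IsKernelOf {N T Q : XMod} (κ : XModHom N T) (α : XModHom T Q) : Prop :=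
  comp α κ = triv N Q ∧
    ∀ (X : XMod) (u : XModHom X T), comp α u = triv X Q →
      ∃! v : XModHom X N, comp κ v = u

end XModHom

/-- `1 → N → T → Q → 1` is a short exact sequence of crossed modules. -/
def ShortExact {N T Q : XMod} (κ : XModHom N T) (α : XModHom T Q) : Prop :=
  XModHom.IsKernelOf κ α ∧ XModHom.RegEpi α
/-- A localization functor (coaugmented idempotent functor) on `XMod`. -/
structure LocalizationFunctor where
  obj : XMod → XMod
  map : ∀ {A B : XMod}, XModHom A B → XModHom (obj A) (obj B)
  map_id : ∀ A : XMod, map (XModHom.id A) = XModHom.id (obj A)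
  map_comp : ∀ {A B C : XMod} (f : XModHom A B) (g : XModHom B C),
    map (XModHom.comp g f) = XModHom.comp (map g) (map f)
  ell : ∀ A : XMod, XModHom A (obj A)
  natural : ∀ {A B : XMod} (f : XModHom A B),
    XModHom.comp (ell B) f = XModHom.comp (map f) (ell A)
  iso_ell_obj : ∀ A : XMod, XModHom.IsIso (ell (obj A))
  iso_map_ell : ∀ A : XMod, XModHom.IsIso (map (ell A))

namespace LocalizationFunctor

/-- A crossed module is `L`-local if its coaugmentation is an isomorphism. -/
def IsLocal (L : LocalizationFunctor) (X : XMod) : Prop :=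
  XModHom.IsIso (L.ell X)

/-- `L` is a regular-epi localization if every coaugmentation morphism is a
regular epimorphism. -/
def RegEpiLoc (L : LocalizationFunctor) : Prop :=
  ∀ X : XMod, XModHom.RegEpi (L.ell X)

/-- A short exact sequence is `L`-flat if applying `L` yields a short exact sequence. -/
def LFlat (L : LocalizationFunctor) {N T Q : XMod} (κ : XModHom N T) (α : XModHom T Q) : Prop :=
  ShortExact (L.map κ) (L.map α)

end LocalizationFunctor
section Pullback

variable {T Q Q' : XMod} (α : XModHom T Q) (g : XModHom Q' Q)

/-- Level-1 part of the pullback `T ×_Q Q'`, computed componentwise. -/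
def pbM : Subgroup (T.M × Q'.M) where
  carrier := {p | α.f1 p.1 = g.f1 p.2}
  one_mem' := by simp
  mul_mem' := by
    intro a b ha hb
    simp only [Set.mem_setOf_eq, Prod.fst_mul, Prod.snd_mul, map_mul] at *
    rw [ha, hb]
  inv_mem' := by
    intro a ha
    simp only [Set.mem_setOf_eq, Prod.fst_inv, Prod.snd_inv, map_inv] at *
    rw [ha]

/-- Level-2 part of the pullback `T ×_Q Q'`, computed componentwise. -/
def pbG : Subgroup (T.G × Q'.G) where
  carrier := {p | α.f2 p.1 = g.f2 p.2}
  one_mem' := by simp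
  mul_mem' := by
    intro a b ha hb
    simp only [Set.mem_setOf_eq, Prod.fst_mul, Prod.snd_mul, map_mul] at *
    rw [ha, hb]
  inv_mem' := by
    intro a ha
    simp only [Set.mem_setOf_eq, Prod.fst_inv, Prod.snd_inv, map_inv] at *
    rw [ha]

theorem mem_pbM_iff (p : T.M × Q'.M) : p ∈ pbM α g ↔ α.f1 p.1 = g.f1 p.2 := Iff.rfl

theorem mem_pbG_iff (p : T.G × Q'.G) : p ∈ pbG α g ↔ α.f2 p.1 = g.f2 p.2 := Iff.rfl

theorem pb_act_mem {b : T.G × Q'.G} (hb : b ∈ pbG α g) {p : T.M × Q'.M}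
    (hp : p ∈ pbM α g) : (T.act b.1 p.1, Q'.act b.2 p.2) ∈ pbM α g := by
  have hb' : α.f2 b.1 = g.f2 b.2 := hb
  have hp' : α.f1 p.1 = g.f1 p.2 := hp
  show α.f1 (T.act b.1 p.1) = g.f1 (Q'.act b.2 p.2)
  rw [α.equiv, g.equiv, hb', hp']

theorem XMod.act_inv_act (X : XMod) (b : X.G) (t : X.M) :
    X.act b⁻¹ (X.act b t) = t := by
  rw [← MulAut.mul_apply, ← map_mul, inv_mul_cancel, map_one, MulAut.one_apply]

theorem XMod.act_act_inv (X : XMod) (b : X.G) (t : X.M) :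
    X.act b (X.act b⁻¹ t) = t := by
  rw [← MulAut.mul_apply, ← map_mul, mul_inv_cancel, map_one, MulAut.one_apply]

/-- The action of an element of the pullback on the level-1 part, as a group
automorphism. -/
def pbActEquiv (b : ↥(pbG α g)) : ↥(pbM α g) ≃* ↥(pbM α g) where
  toFun p := ⟨(T.act b.1.1 p.1.1, Q'.act b.1.2 p.1.2), pb_act_mem α g b.2 p.2⟩
  invFun p := ⟨(T.act b.1.1⁻¹ p.1.1, Q'.act b.1.2⁻¹ p.1.2),
    pb_act_mem α g ((pbG α g).inv_mem b.2) p.2⟩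
  left_inv p := by
    apply Subtype.ext
    exact Prod.ext (T.act_inv_act _ _) (Q'.act_inv_act _ _)
  right_inv p := by
    apply Subtype.ext
    exact Prod.ext (T.act_act_inv _ _) (Q'.act_act_inv _ _)
  map_mul' p q := by
    apply Subtype.ext
    exact Prod.ext (map_mul _ _ _) (map_mul _ _ _)

/-- The pullback `T ×_Q Q'` of `α : T → Q` along `g : Q' → Q`, computed
componentwise. -/
def pbXMod : XMod where
  M := ↥(pbM α g)
  G := ↥(pbG α g)
  act :=
    { toFun := pbActEquiv α g
      map_one' := by
        apply MulEquiv.ext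
        intro p
        apply Subtype.ext
        apply Prod.ext
        · show T.act (1 : ↥(pbG α g)).1.1 p.1.1 = p.1.1
          simp
        · show Q'.act (1 : ↥(pbG α g)).1.2 p.1.2 = p.1.2
          simp
      map_mul' := by
        intro b c
        apply MulEquiv.ext
        intro p
        apply Subtype.ext
        apply Prod.ext
        · show T.act (b * c).1.1 p.1.1 = T.act b.1.1 (T.act c.1.1 p.1.1)
          simp [map_mul]
        · show Q'.act (b * c).1.2 p.1.2 = Q'.act b.1.2 (Q'.act c.1.2 p.1.2)
          simp [map_mul] }
  d :=
    { toFun := fun p => ⟨(T.d p.1.1, Q'.d p.1.2), by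
        have hp : α.f1 p.1.1 = g.f1 p.1.2 := p.2
        show α.f2 (T.d p.1.1) = g.f2 (Q'.d p.1.2)
        rw [← α.comm_d, ← g.comm_d, hp]⟩
      map_one' := by
        apply Subtype.ext
        apply Prod.ext <;> simp
      map_mul' := by
        intro p q
        apply Subtype.ext
        apply Prod.ext <;> simp }
  act_d := by
    intro b p
    apply Subtype.ext
    apply Prod.ext
    · exact T.act_d _ _
    · exact Q'.act_d _ _
  peiffer := by
    intro p q
    apply Subtype.ext
    apply Prod.ext
    · exact T.peiffer _ _
    · exact Q'.peiffer _ _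

/-- First projection of the pullback. -/
def pbFst : XModHom (pbXMod α g) T where
  f1 := (MonoidHom.fst T.M Q'.M).comp (pbM α g).subtype
  f2 := (MonoidHom.fst T.G Q'.G).comp (pbG α g).subtype
  comm_d := fun _ => rfl
  equiv := fun _ _ => rfl

/-- Second projection of the pullback. -/
def pbSnd : XModHom (pbXMod α g) Q' where
  f1 := (MonoidHom.snd T.M Q'.M).comp (pbM α g).subtype
  f2 := (MonoidHom.snd T.G Q'.G).comp (pbG α g).subtype
  comm_d := fun _ => rfl
  equiv := fun _ _ => rfl

end Pullback
section PullbackMaps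

variable {N T Q Q' : XMod}

/-- The induced morphism from the kernel `N` into the pullback `T ×_Q Q'`. -/
def pbIn (κ : XModHom N T) (α : XModHom T Q) (g : XModHom Q' Q)
    (h : XModHom.comp α κ = XModHom.triv N Q) : XModHom N (pbXMod α g) where
  f1 :=
    { toFun := fun n => ⟨(κ.f1 n, 1), by
        show α.f1 (κ.f1 n) = g.f1 1
        have := congrArg XModHom.f1 h
        have h' : α.f1 (κ.f1 n) = 1 := DFunLike.congr_fun this n
        rw [h', map_one]⟩
      map_one' := by
        apply Subtype.ext
        apply Prod.ext <;> simp <;> first | rfl | exact map_one _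
      map_mul' := by
        intro a b
        apply Subtype.ext
        show (κ.f1 (a * b), (1 : Q'.M)) = (κ.f1 a, (1 : Q'.M)) * (κ.f1 b, (1 : Q'.M))
        simp [Prod.ext_iff, map_mul] }
  f2 :=
    { toFun := fun n => ⟨(κ.f2 n, 1), by
        show α.f2 (κ.f2 n) = g.f2 1
        have := congrArg XModHom.f2 h
        have h' : α.f2 (κ.f2 n) = 1 := DFunLike.congr_fun this n
        rw [h', map_one]⟩
      map_one' := by
        apply Subtype.ext
        apply Prod.ext <;> simp <;> first | rfl | exact map_one _
      map_mul' := by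
        intro a b
        apply Subtype.ext
        show (κ.f2 (a * b), (1 : Q'.G)) = (κ.f2 a, (1 : Q'.G)) * (κ.f2 b, (1 : Q'.G))
        simp [Prod.ext_iff, map_mul] }
  comm_d := by
    intro n
    apply Subtype.ext
    apply Prod.ext
    · exact κ.comm_d n
    · show Q'.d (1 : Q'.M) = 1
      simp
  equiv := by
    intro b n
    apply Subtype.ext
    apply Prod.ext
    · exact κ.equiv b n
    · show (1 : Q'.M) = Q'.act 1 1
      simp

/-- The induced morphism into the pullback `T ×_Q Q'` from an object mapping
trivially to `Q` through the second leg. -/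
def pbInR (α : XModHom T Q) (g : XModHom Q' Q) {X : XMod} (u : XModHom X Q')
    (h : XModHom.comp g u = XModHom.triv X Q) : XModHom X (pbXMod α g) where
  f1 :=
    { toFun := fun n => ⟨(1, u.f1 n), by
        show α.f1 1 = g.f1 (u.f1 n)
        have := congrArg XModHom.f1 h
        have h' : g.f1 (u.f1 n) = 1 := DFunLike.congr_fun this n
        rw [h', map_one]⟩
      map_one' := by
        apply Subtype.ext
        apply Prod.ext <;> simp <;> first | rfl | exact map_one _
      map_mul' := by
        intro a b
        apply Subtype.ext
        show ((1 : T.M), u.f1 (a * b)) = ((1 : T.M), u.f1 a) * ((1 : T.M), u.f1 b)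
        simp [Prod.ext_iff, map_mul] }
  f2 :=
    { toFun := fun n => ⟨(1, u.f2 n), by
        show α.f2 1 = g.f2 (u.f2 n)
        have := congrArg XModHom.f2 h
        have h' : g.f2 (u.f2 n) = 1 := DFunLike.congr_fun this n
        rw [h', map_one]⟩
      map_one' := by
        apply Subtype.ext
        apply Prod.ext <;> simp <;> first | rfl | exact map_one _
      map_mul' := by
        intro a b
        apply Subtype.ext
        show ((1 : T.G), u.f2 (a * b)) = ((1 : T.G), u.f2 a) * ((1 : T.G), u.f2 b)
        simp [Prod.ext_iff, map_mul] }
  comm_d := by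
    intro n
    apply Subtype.ext
    apply Prod.ext
    · show T.d (1 : T.M) = 1
      simp
    · exact u.comm_d n
  equiv := by
    intro b n
    apply Subtype.ext
    apply Prod.ext
    · show (1 : T.M) = T.act 1 1
      simp
    · exact u.equiv b n

/-- The morphism of pullbacks `T ×_Q Q' → E ×_Q Q'` induced by `f : T → E`
with `p ∘ f = α`. -/
def pbMapL {E : XMod} (α : XModHom T Q) (p : XModHom E Q) (g : XModHom Q' Q)
    (f : XModHom T E) (hpf : XModHom.comp p f = α) :
    XModHom (pbXMod α g) (pbXMod p g) where
  f1 :=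
    { toFun := fun w => ⟨(f.f1 w.1.1, w.1.2), by
        show p.f1 (f.f1 w.1.1) = g.f1 w.1.2
        have h' : p.f1 (f.f1 w.1.1) = α.f1 w.1.1 :=
          DFunLike.congr_fun (congrArg XModHom.f1 hpf) w.1.1
        rw [h']
        exact w.2⟩
      map_one' := by
        apply Subtype.ext
        apply Prod.ext <;> simp <;> first | rfl | exact map_one _
      map_mul' := by
        intro a b
        apply Subtype.ext
        apply Prod.ext
        · exact map_mul f.f1 a.1.1 b.1.1
        · rfl }
  f2 :=
    { toFun := fun w => ⟨(f.f2 w.1.1, w.1.2), by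
        show p.f2 (f.f2 w.1.1) = g.f2 w.1.2
        have h' : p.f2 (f.f2 w.1.1) = α.f2 w.1.1 :=
          DFunLike.congr_fun (congrArg XModHom.f2 hpf) w.1.1
        rw [h']
        exact w.2⟩
      map_one' := by
        apply Subtype.ext
        apply Prod.ext <;> simp <;> first | rfl | exact map_one _
      map_mul' := by
        intro a b
        apply Subtype.ext
        apply Prod.ext
        · exact map_mul f.f2 a.1.1 b.1.1
        · rfl }
  comm_d := by
    intro w
    apply Subtype.ext
    apply Prod.ext
    · exact f.comm_d _
    · rfl
  equiv := by
    intro b w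
    apply Subtype.ext
    apply Prod.ext
    · exact f.equiv _ _
    · rfl

end PullbackMaps

/-- A commuting square is a pullback square (categorical definition). -/
def IsPullbackSquare {P X Y Z : XMod} (p1 : XModHom P X) (p2 : XModHom P Y)
    (f : XModHom X Z) (h : XModHom Y Z) : Prop :=
  XModHom.comp f p1 = XModHom.comp h p2 ∧
    ∀ (W : XMod) (u : XModHom W X) (v : XModHom W Y),
      XModHom.comp f u = XModHom.comp h v →
        ∃! w : XModHom W P, XModHom.comp p1 w = u ∧ XModHom.comp p2 w = v

namespace LocalizationFunctor

/-- `L` is admissible for the class of regular epimorphisms: applying `L` to the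
pullback of a regular epimorphism `α : LT → LQ` along the coaugmentation
`ℓ^Q : Q → LQ` yields again a pullback square. -/
def Admissible (L : LocalizationFunctor) : Prop :=
  ∀ (T Q : XMod) (α : XModHom (L.obj T) (L.obj Q)), XModHom.RegEpi α →
    IsPullbackSquare (L.map (pbFst α (L.ell Q))) (L.map (pbSnd α (L.ell Q)))
      (L.map α) (L.map (L.ell Q))

/-- `L` is conditionally flat: the pullback of any `L`-flat short exact sequence
along any morphism is again `L`-flat. -/
def ConditionallyFlat (L : LocalizationFunctor) : Prop :=
  ∀ (N T Q : XMod) (κ : XModHom N T) (α : XModHom T Q) (hse : ShortExact κ α),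
    L.LFlat κ α →
      ∀ (Q' : XMod) (g : XModHom Q' Q),
        L.LFlat (pbIn κ α g hse.1.1) (pbSnd α g)

/-- A short exact sequence `1 → N → T → Q → 1` admits a fiberwise localization:
there is a short exact sequence `1 → LN → E → Q → 1` together with an
`L`-equivalence `T → E` compatible with the coaugmentation of `N`. -/
def AdmitsFiberwise (L : LocalizationFunctor) {N T Q : XMod} (κ : XModHom N T)
    (α : XModHom T Q) : Prop :=
  ∃ (E : XMod) (j : XModHom (L.obj N) E) (p : XModHom E Q) (e : XModHom T E),
    ShortExact j p ∧ XModHom.IsIso (L.map e) ∧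
      XModHom.comp e κ = XModHom.comp j (L.ell N) ∧ XModHom.comp p e = α

end LocalizationFunctor
section Kernel

variable {N T : XMod} (f : XModHom N T)

theorem ker_act_mem {b : N.G} (hb : b ∈ f.f2.ker) {n : N.M} (hn : n ∈ f.f1.ker) :
    N.act b n ∈ f.f1.ker := by
  have hb' : f.f2 b = 1 := hb
  have hn' : f.f1 n = 1 := hn
  show f.f1 (N.act b n) = 1
  rw [f.equiv, hb', hn', map_one]

/-- The automorphism of `ker f.f1` induced by an element of `ker f.f2`. -/
def kerActEquiv (b : ↥f.f2.ker) : ↥f.f1.ker ≃* ↥f.f1.ker where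
  toFun n := ⟨N.act b.1 n.1, ker_act_mem f b.2 n.2⟩
  invFun n := ⟨N.act b.1⁻¹ n.1, ker_act_mem f (f.f2.ker.inv_mem b.2) n.2⟩
  left_inv n := Subtype.ext (N.act_inv_act _ _)
  right_inv n := Subtype.ext (N.act_act_inv _ _)
  map_mul' n m := Subtype.ext (map_mul _ _ _)

/-- The kernel of a morphism of crossed modules, computed componentwise. -/
def kerXMod : XMod where
  M := ↥f.f1.ker
  G := ↥f.f2.ker
  act :=
    { toFun := kerActEquiv f
      map_one' := by
        apply MulEquiv.ext
        intro n
        apply Subtype.ext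
        show N.act (1 : ↥f.f2.ker).1 n.1 = n.1
        simp
      map_mul' := by
        intro b c
        apply MulEquiv.ext
        intro n
        apply Subtype.ext
        show N.act (b * c).1 n.1 = N.act b.1 (N.act c.1 n.1)
        simp [map_mul] }
  d :=
    { toFun := fun n => ⟨N.d n.1, by
        have hn : f.f1 n.1 = 1 := n.2
        show f.f2 (N.d n.1) = 1
        rw [← f.comm_d, hn, map_one]⟩
      map_one' := by
        apply Subtype.ext
        simp
      map_mul' := by
        intro a b
        apply Subtype.ext
        show N.d (a * b).1 = N.d a.1 * N.d b.1
        simp }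
  act_d := by
    intro b n
    apply Subtype.ext
    exact N.act_d _ _
  peiffer := by
    intro n m
    apply Subtype.ext
    exact N.peiffer _ _

/-- The inclusion of the kernel. -/
def kerIncl : XModHom (kerXMod f) N where
  f1 := f.f1.ker.subtype
  f2 := f.f2.ker.subtype
  comm_d := fun _ => rfl
  equiv := fun _ _ => rfl

end Kernel

/-- A crossed module is trivial if both underlying groups are trivial. -/
def XMod.IsTrivial (X : XMod) : Prop :=
  (∀ m : X.M, m = 1) ∧ ∀ b : X.G, b = 1

/-- `X` is `A`-null if the only morphism of crossed modules `A → X` is the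
trivial one. -/
def ANull (A X : XMod) : Prop :=
  ∀ φ : XModHom A X, φ = XModHom.triv A X

/-- `X` is `f`-local if precomposition with `f` is a bijection on morphisms
into `X`. -/
def FLocal {B C : XMod} (f : XModHom B C) (X : XMod) : Prop :=
  Function.Bijective fun φ : XModHom C X => XModHom.comp φ f

/-- The subgroup `[N₂, N₁]` of `N₁` generated by the elements `ᵇt·t⁻¹`. -/
def actCommutator (N : XMod) : Subgroup N.M :=
  Subgroup.closure {x | ∃ (b : N.G) (t : N.M), x = N.act b t * t⁻¹}

section NormalClosure

variable {A W : XMod} (φ : XModHom A W)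

/-- The level-2 part of the normal closure of the image of `φ`:
the normal closure of `φ₂(A₂)` in `W₂`. -/
def ncl2 : Subgroup W.G :=
  Subgroup.normalClosure (Set.range φ.f2)

/-- The level-1 part of the normal closure of the image of `φ`:
the subgroup `φ₁(A₁)^{W₂}·[φ₂(A₂)^{W₂}, W₁]` of `W₁`. -/
def ncl1 : Subgroup W.M :=
  Subgroup.closure
    ({x | ∃ (b : W.G) (m : A.M), x = W.act b (φ.f1 m)} ∪
      {x | ∃ s ∈ ncl2 φ, ∃ w : W.M, x = W.act s w * w⁻¹})

end NormalClosure

/-!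
Let `P` be the pullback of `α : LT → LQ` along `ℓ^Q`. The projection `P → LT` is onto and
`ℓ^{LT}` is bijective, so by naturality `L(P → LT)` is an isomorphism as soon as the kernel of
`P → LT`, the pairs `(1, q)` with `ℓ^Q q = 1`, is killed by `ℓ^P`. It is, because `LT` is
abelian (trivial action, abelian base): every generator `ᵇt·t⁻¹` or `[a, b]` of `ker ℓ^Q`
lifts along the surjection `P → Q` to a generator of `ker ℓ^P`, whose first coordinate is
then `1`. Finally, a commuting square with two parallel sides invertible is a pullback, and
`L(ℓ^Q)` is invertible.
-/

theorem MonoidHom.bijective_of_comp_eq {A B A' B' : Type*} [Group A] [Group B] [Group A']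
    [Group B'] {f : A →* B} {ℓA : A →* A'} {ℓB : B →* B'} {φ : A' →* B'}
    (h : φ.comp ℓA = ℓB.comp f) (hℓA : Function.Surjective ℓA) (hf : Function.Surjective f)
    (hℓB : Function.Bijective ℓB) (hker : f.ker ≤ ℓA.ker) : Function.Bijective φ := by
  have hcomp : ∀ x, φ (ℓA x) = ℓB (f x) := DFunLike.congr_fun h
  refine ⟨(injective_iff_map_eq_one φ).mpr ?_, ?_⟩
  · intro z hz
    obtain ⟨x, rfl⟩ := hℓA z
    have hfx : f x = 1 := hℓB.1 (by rw [← hcomp, hz, map_one])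
    exact hker hfx
  · intro z
    obtain ⟨y, rfl⟩ := hℓB.2 z
    obtain ⟨x, rfl⟩ := hf y
    exact ⟨ℓA x, hcomp x⟩

theorem Subgroup.mem_of_fst_eq_one {A B : Type*} [Group A] [Group B] {S : Subgroup (A × B)}
    {H : Subgroup S} (hfst : H.map ((MonoidHom.fst A B).comp S.subtype) = ⊥) {x : S}
    (hx1 : x.1.1 = 1) (hx2 : x.1.2 ∈ H.map ((MonoidHom.snd A B).comp S.subtype)) : x ∈ H := by
  obtain ⟨y, hy, hyx⟩ := hx2
  have hy1 : y.1.1 = 1 := (Subgroup.mem_bot).mp (hfst ▸ Subgroup.mem_map_of_mem _ hy)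
  have hxy : x = y := Subtype.ext (Prod.ext (hx1.trans hy1.symm) hyx.symm)
  exact hxy ▸ hy

namespace XModHom

theorem comp_assoc {A B C D : XMod} (h : XModHom C D) (g : XModHom B C) (f : XModHom A B) :
    comp (comp h g) f = comp h (comp g f) :=
  ext (MonoidHom.comp_assoc _ _ _) (MonoidHom.comp_assoc _ _ _)

theorem id_comp {A B : XMod} (f : XModHom A B) : comp (id B) f = f :=
  ext (MonoidHom.id_comp _) (MonoidHom.id_comp _)

theorem IsIso.bijective_f1 {A B : XMod} {f : XModHom A B} (hf : f.IsIso) :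
    Function.Bijective f.f1 := by
  obtain ⟨g, hgf, hfg⟩ := hf
  exact Function.bijective_iff_has_inverse.mpr
    ⟨g.f1, DFunLike.congr_fun (congrArg f1 hgf), DFunLike.congr_fun (congrArg f1 hfg)⟩

theorem IsIso.bijective_f2 {A B : XMod} {f : XModHom A B} (hf : f.IsIso) :
    Function.Bijective f.f2 := by
  obtain ⟨g, hgf, hfg⟩ := hf
  exact Function.bijective_iff_has_inverse.mpr
    ⟨g.f2, DFunLike.congr_fun (congrArg f2 hgf), DFunLike.congr_fun (congrArg f2 hfg)⟩

theorem IsIso.cancel_left {A B W : XMod} {f : XModHom A B} (hf : f.IsIso)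
    {u v : XModHom W A} (h : comp f u = comp f v) : u = v := by
  obtain ⟨g, hgf, _⟩ := hf
  calc u = comp (comp g f) u := by rw [hgf, id_comp]
    _ = comp (comp g f) v := by rw [comp_assoc, h, ← comp_assoc]
    _ = v := by rw [hgf, id_comp]

theorem isIso_of_bijective {A B : XMod} (f : XModHom A B)
    (h1 : Function.Bijective f.f1) (h2 : Function.Bijective f.f2) : f.IsIso := by
  let e1 : A.M ≃* B.M := MulEquiv.ofBijective f.f1 h1
  let e2 : A.G ≃* B.G := MulEquiv.ofBijective f.f2 h2
  refine ⟨⟨e1.symm.toMonoidHom, e2.symm.toMonoidHom, fun m => ?_, fun b m => ?_⟩,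
    ext (MonoidHom.ext e1.symm_apply_apply) (MonoidHom.ext e2.symm_apply_apply),
    ext (MonoidHom.ext e1.apply_symm_apply) (MonoidHom.ext e2.apply_symm_apply)⟩
  · apply e2.injective
    change f.f2 (A.d (e1.symm m)) = e2 (e2.symm (B.d m))
    rw [← f.comm_d, e2.apply_symm_apply]
    exact congrArg B.d (e1.apply_symm_apply m)
  · apply e1.injective
    change e1 (e1.symm (B.act b m)) = f.f1 (A.act (e2.symm b) (e1.symm m))
    rw [f.equiv, e1.apply_symm_apply]
    exact congrArg₂ (fun c n => B.act c n) (e2.apply_symm_apply b).symm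
      (e1.apply_symm_apply m).symm

theorem map_actCommutator_le {N T : XMod} (f : XModHom N T) :
    (actCommutator N).map f.f1 ≤ actCommutator T := by
  rw [actCommutator, MonoidHom.map_closure]
  refine Subgroup.closure_mono ?_
  rintro _ ⟨_, ⟨b, t, rfl⟩, rfl⟩
  exact ⟨f.f2 b, f.f1 t, by rw [map_mul, map_inv, f.equiv]⟩

theorem map_actCommutator {N T : XMod} {f : XModHom N T} (hf : f.RegEpi) :
    (actCommutator N).map f.f1 = actCommutator T := by
  refine le_antisymm (map_actCommutator_le f) ((Subgroup.closure_le _).mpr ?_)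
  rintro _ ⟨b, t, rfl⟩
  obtain ⟨b', rfl⟩ := hf.2 b
  obtain ⟨t', rfl⟩ := hf.1 t
  exact ⟨N.act b' t' * t'⁻¹, Subgroup.subset_closure ⟨b', t', rfl⟩,
    by rw [map_mul, map_inv, f.equiv]⟩

end XModHom

theorem isPullbackSquare_of_isIso {P X Y Z : XMod} {p1 : XModHom P X} {p2 : XModHom P Y}
    {f : XModHom X Z} {h : XModHom Y Z} (hp1 : p1.IsIso) (hh : h.IsIso)
    (hc : XModHom.comp f p1 = XModHom.comp h p2) : IsPullbackSquare p1 p2 f h := by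
  obtain ⟨ψ, hψp, hpψ⟩ := hp1
  have hp1ψ : ∀ {W : XMod} (u : XModHom W X), XModHom.comp p1 (XModHom.comp ψ u) = u := by
    intro W u; rw [← XModHom.comp_assoc, hpψ, XModHom.id_comp]
  refine ⟨hc, fun W u v huv => ⟨XModHom.comp ψ u, ⟨hp1ψ u, hh.cancel_left ?_⟩, ?_⟩⟩
  · rw [← XModHom.comp_assoc, ← hc, XModHom.comp_assoc, hp1ψ, huv]
  · rintro w ⟨rfl, -⟩
    rw [← XModHom.comp_assoc, hψp, XModHom.id_comp]

section Pullback

variable {T Q Q' : XMod} (α : XModHom T Q) (g : XModHom Q' Q)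

theorem pb_comm : XModHom.comp α (pbFst α g) = XModHom.comp g (pbSnd α g) :=
  XModHom.ext (MonoidHom.ext fun w => w.2) (MonoidHom.ext fun w => w.2)

variable {α g}

theorem regEpi_pbFst (hg : g.RegEpi) : (pbFst α g).RegEpi := by
  constructor
  · intro t
    obtain ⟨q, hq⟩ := hg.1 (α.f1 t)
    exact ⟨⟨(t, q), hq.symm⟩, rfl⟩
  · intro b
    obtain ⟨c, hc⟩ := hg.2 (α.f2 b)
    exact ⟨⟨(b, c), hc.symm⟩, rfl⟩

theorem regEpi_pbSnd (hα : α.RegEpi) : (pbSnd α g).RegEpi := by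
  constructor
  · intro q
    obtain ⟨t, ht⟩ := hα.1 (g.f1 q)
    exact ⟨⟨(t, q), ht⟩, rfl⟩
  · intro c
    obtain ⟨b, hb⟩ := hα.2 (g.f2 c)
    exact ⟨⟨(b, c), hb⟩, rfl⟩

theorem ker_pbFst_f1_le_actCommutator (hT : actCommutator T = ⊥) (hα : α.RegEpi)
    (hg : g.f1.ker ≤ actCommutator Q') :
    (pbFst α g).f1.ker ≤ actCommutator (pbXMod α g) := by
  intro x hx
  have hx1 : x.1.1 = 1 := hx
  have hx2 : g.f1 x.1.2 = 1 := by rw [← x.2, hx1, map_one]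
  refine Subgroup.mem_of_fst_eq_one ?_ hx1 ?_
  · exact le_bot_iff.mp (hT ▸ XModHom.map_actCommutator_le (pbFst α g))
  · exact (XModHom.map_actCommutator (regEpi_pbSnd hα)).ge (hg hx2)

theorem ker_pbFst_f2_le_commutator (hT : commutator T.G = ⊥) (hα : α.RegEpi)
    (hg : g.f2.ker ≤ commutator Q'.G) :
    (pbFst α g).f2.ker ≤ commutator (pbXMod α g).G := by
  intro x hx
  have hx1 : x.1.1 = 1 := hx
  have hx2 : g.f2 x.1.2 = 1 := by rw [← x.2, hx1, map_one]
  refine Subgroup.mem_of_fst_eq_one ?_ hx1 ?_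
  · have hmap := map_derivedSeries_le_derivedSeries (pbFst α g).f2 1
    rw [derivedSeries_one, derivedSeries_one, hT] at hmap
    exact le_bot_iff.mp hmap
  · have hmap := map_derivedSeries_eq (regEpi_pbSnd (g := g) hα).2 1
    rw [derivedSeries_one, derivedSeries_one] at hmap
    exact hmap ▸ hg hx2

end Pullback

namespace LocalizationFunctor

def IsAbelianization (L : LocalizationFunctor) : Prop :=
  ∀ N : XMod,
    Function.Surjective (L.ell N).f1 ∧ Function.Surjective (L.ell N).f2 ∧
    (L.ell N).f1.ker = actCommutator N ∧ (L.ell N).f2.ker = commutator N.G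

variable {L : LocalizationFunctor}

theorem IsAbelianization.regEpi_ell (hL : L.IsAbelianization) (N : XMod) : (L.ell N).RegEpi :=
  ⟨(hL N).1, (hL N).2.1⟩

theorem IsAbelianization.actCommutator_obj (hL : L.IsAbelianization) (T : XMod) :
    actCommutator (L.obj T) = ⊥ := by
  rw [← (hL (L.obj T)).2.2.1]
  exact (MonoidHom.ker_eq_bot_iff _).mpr (L.iso_ell_obj T).bijective_f1.1

theorem IsAbelianization.commutator_obj (hL : L.IsAbelianization) (T : XMod) :
    commutator (L.obj T).G = ⊥ := by
  rw [← (hL (L.obj T)).2.2.2]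
  exact (MonoidHom.ker_eq_bot_iff _).mpr (L.iso_ell_obj T).bijective_f2.1

theorem IsAbelianization.isIso_map_pbFst (hL : L.IsAbelianization) {T Q : XMod}
    {α : XModHom (L.obj T) (L.obj Q)} (hα : α.RegEpi) : (L.map (pbFst α (L.ell Q))).IsIso := by
  have hnat := L.natural (pbFst α (L.ell Q))
  have hP := hL (pbXMod α (L.ell Q))
  have hQ := hL Q
  have hpr := regEpi_pbFst (α := α) (hL.regEpi_ell Q)
  refine XModHom.isIso_of_bijective _ ?_ ?_
  · refine MonoidHom.bijective_of_comp_eq (congrArg XModHom.f1 hnat).symm hP.1 hpr.1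
      (L.iso_ell_obj T).bijective_f1 ?_
    rw [hP.2.2.1]
    exact ker_pbFst_f1_le_actCommutator (hL.actCommutator_obj T) hα hQ.2.2.1.le
  · refine MonoidHom.bijective_of_comp_eq (congrArg XModHom.f2 hnat).symm hP.2.1 hpr.2
      (L.iso_ell_obj T).bijective_f2 ?_
    rw [hP.2.2.2]
    exact ker_pbFst_f2_le_commutator (hL.commutator_obj T) hα hQ.2.2.2.le

end LocalizationFunctor

/-- The abelianization functor on `XMod`, sending
`(N₁, N₂, ∂)` to `(N₁/[N₂,N₁], N₂/[N₂,N₂])` (characterized here by its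
coaugmentation being the componentwise quotient map: surjective on both levels,
with level-1 kernel `[N₂,N₁]` and level-2 kernel the commutator subgroup of
`N₂`), is admissible for the class of regular epimorphisms. -/
theorem abelianization_admissible (L : LocalizationFunctor)
    (hAb : ∀ N : XMod,
      Function.Surjective (L.ell N).f1 ∧ Function.Surjective (L.ell N).f2 ∧
      (L.ell N).f1.ker = actCommutator N ∧
      (L.ell N).f2.ker = commutator N.G) :
    L.Admissible := by
  have hL : L.IsAbelianization := hAb
  intro T Q α hα
  refine isPullbackSquare_of_isIso (hL.isIso_map_pbFst hα) (L.iso_map_ell Q) ?_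
  rw [← L.map_comp, ← L.map_comp, pb_comm]
end

section
/- The functor I : XMod → XMod, sending a crossed module (N₁, N₂, ∂) to (N₂, N₂, id) with coaugmentation the morphism (∂, id_{N₂}), is a localization functor that is not a regular-epi localization but is conditionally flat (and hence admissible for the class of regular epimorphisms). -/
set_option linter.unusedVariables false

/-- The crossed module `(H, H, id)` with `H` acting on itself by conjugation. -/
@[reducible] def conjXMod (H : Type) [Group H] : XMod where
  M := H
  G := H
  act := MulAut.conj
  d := MonoidHom.id H
  act_d := by intro b t; simp [MulAut.conj_apply]
  peiffer := by intro t s; simp [MulAut.conj_apply]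

/-- The localization functor `I` sending `(N₁, N₂, ∂)` to `(N₂, N₂, id)`, with
coaugmentation `(∂, id)`. -/
def IFun : LocalizationFunctor where
  obj X := conjXMod X.G
  map {A B} f :=
    { f1 := f.f2
      f2 := f.f2
      comm_d := fun _ => rfl
      equiv := by
        intro b n
        show f.f2 (b * n * b⁻¹) = f.f2 b * f.f2 n * (f.f2 b)⁻¹
        simp }
  map_id A := rfl
  map_comp f g := rfl
  ell A :=
    { f1 := A.d
      f2 := MonoidHom.id A.G
      comm_d := fun _ => rfl
      equiv := by
        intro b n
        show A.d (A.act b n) = b * A.d n * b⁻¹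
        exact A.act_d b n }
  natural {A B} f := by
    apply XModHom.ext
    · apply MonoidHom.ext
      intro a
      exact f.comm_d a
    · rfl
  iso_ell_obj A := by
    refine ⟨⟨MonoidHom.id A.G, MonoidHom.id A.G, fun _ => rfl, fun _ _ => rfl⟩, ?_, ?_⟩
    · apply XModHom.ext <;> rfl
    · apply XModHom.ext <;> rfl
  iso_map_ell A := by
    refine ⟨⟨MonoidHom.id A.G, MonoidHom.id A.G, fun _ => rfl, fun _ _ => rfl⟩, ?_, ?_⟩
    · apply XModHom.ext <;> rfl
    · apply XModHom.ext <;> rfl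

/-!
`I` only sees the top groups: `I f = (f₂, f₂)` between crossed modules of the form `(H, H, id)`,
and a morphism `X → (K, K, id)` is just a pair of homomorphisms `X₁ → K`, `X₂ → K` compatible
with `∂` and the actions. Probing with the crossed modules `(1, H, 1)` shows that `(φ, φ)` is a
kernel of `(ψ, ψ)` exactly when `1 → H →φ K →ψ L` is exact. Hence a short exact sequence is
`I`-flat iff its top row `1 → N₂ → T₂ → Q₂ → 1` is a short exact sequence of groups, which is
stable under pullback. The same description of morphisms shows that `I` preserves pullbacks,
whence admissibility. Finally `ℓ = (∂, id)` is not surjective on `(1, ℤ, 1)`.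
-/

theorem XModHom.ext_iff {N T : XMod} {f g : XModHom N T} :
    f = g ↔ (∀ n, f.f1 n = g.f1 n) ∧ ∀ b, f.f2 b = g.f2 b :=
  ⟨fun h => h ▸ ⟨fun _ => rfl, fun _ => rfl⟩,
    fun h => XModHom.ext (MonoidHom.ext h.1) (MonoidHom.ext h.2)⟩

@[reducible] def XMod.ofGroup (H : Type) [Group H] : XMod where
  M := PUnit
  G := H
  act := 1
  d := 1
  act_d _ _ := by simp
  peiffer _ _ := Subsingleton.elim _ _

def XModHom.ofGroup {H : Type} [Group H] (X : XMod) (φ : H →* X.G) :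
    XModHom (XMod.ofGroup H) X where
  f1 := 1
  f2 := φ
  comm_d _ := show X.d 1 = φ 1 by simp
  equiv _ _ := by simp

section Conj

variable {H K L : Type} [Group H] [Group K] [Group L]

def conjHom (φ : H →* K) : XModHom (conjXMod H) (conjXMod K) where
  f1 := φ
  f2 := φ
  comm_d _ := rfl
  equiv b n := by simp [MulAut.conj_apply]

theorem conjHom_comp_eq_triv_iff {X : XMod} (ψ : K →* L) (u : XModHom X (conjXMod K)) :
    XModHom.comp (conjHom ψ) u = XModHom.triv X (conjXMod L) ↔
      (∀ x, ψ (u.f1 x) = 1) ∧ ∀ b, ψ (u.f2 b) = 1 :=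
  XModHom.ext_iff

theorem conjHom_comp_cancel {X : XMod} {φ : H →* K} (hφ : Function.Injective φ)
    {v v' : XModHom X (conjXMod H)}
    (h : XModHom.comp (conjHom φ) v = XModHom.comp (conjHom φ) v') : v = v' := by
  obtain ⟨h1, h2⟩ := XModHom.ext_iff.1 h
  exact XModHom.ext_iff.2 ⟨fun x => hφ (h1 x), fun b => hφ (h2 b)⟩

noncomputable def conjLift {X : XMod} {φ : H →* K} (hφ : Function.Injective φ)
    (u : XModHom X (conjXMod K)) (h1 : ∀ x, u.f1 x ∈ φ.range) (h2 : ∀ b, u.f2 b ∈ φ.range) :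
    XModHom X (conjXMod H) where
  f1 := (MonoidHom.ofInjective hφ).symm.toMonoidHom.comp (u.f1.codRestrict φ.range h1)
  f2 := (MonoidHom.ofInjective hφ).symm.toMonoidHom.comp (u.f2.codRestrict φ.range h2)
  comm_d x := congrArg (MonoidHom.ofInjective hφ).symm (Subtype.ext (u.comm_d x))
  equiv b x := hφ <| by
    simpa [MonoidHom.apply_ofInjective_symm, MulAut.conj_apply] using u.equiv b x

theorem conjHom_comp_conjLift {X : XMod} {φ : H →* K} (hφ : Function.Injective φ)
    (u : XModHom X (conjXMod K)) (h1 : ∀ x, u.f1 x ∈ φ.range) (h2 : ∀ b, u.f2 b ∈ φ.range) :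
    XModHom.comp (conjHom φ) (conjLift hφ u h1 h2) = u :=
  XModHom.ext_iff.2 ⟨fun x => MonoidHom.apply_ofInjective_symm hφ _,
    fun b => MonoidHom.apply_ofInjective_symm hφ _⟩

theorem isKernelOf_conjHom_iff {φ : H →* K} {ψ : K →* L} :
    XModHom.IsKernelOf (conjHom φ) (conjHom ψ) ↔ Function.Injective φ ∧ φ.range = ψ.ker := by
  constructor
  · rintro ⟨hcomp, hlift⟩
    have hinj : Function.Injective φ := by
      refine (injective_iff_map_eq_one φ).2 fun a ha => ?_
      -- the inclusion of `(1, ker φ, 1)` and the trivial morphism both lift `triv`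
      obtain ⟨v, -, hv⟩ := hlift (XMod.ofGroup φ.ker) (XModHom.triv _ _)
        (XModHom.ext_iff.2 ⟨fun _ => map_one ψ, fun _ => map_one ψ⟩)
      have hincl := hv (XModHom.ofGroup _ φ.ker.subtype)
        (XModHom.ext_iff.2 ⟨fun _ => map_one φ, fun k => k.2⟩)
      have htriv := hv (XModHom.triv _ _)
        (XModHom.ext_iff.2 ⟨fun _ => map_one φ, fun _ => map_one φ⟩)
      exact (XModHom.ext_iff.1 (hincl.trans htriv.symm)).2 ⟨a, ha⟩
    refine ⟨hinj, le_antisymm ?_ fun k hk => ?_⟩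
    · rintro _ ⟨a, rfl⟩
      exact (XModHom.ext_iff.1 hcomp).2 a
    · obtain ⟨v, hv, -⟩ := hlift (XMod.ofGroup ψ.ker) (XModHom.ofGroup _ ψ.ker.subtype)
        ((conjHom_comp_eq_triv_iff _ _).2 ⟨fun _ => map_one ψ, fun k => k.2⟩)
      exact ⟨v.f2 ⟨k, hk⟩, (XModHom.ext_iff.1 hv).2 ⟨k, hk⟩⟩
  · rintro ⟨hinj, hrange⟩
    have hker : ∀ a, ψ (φ a) = 1 := fun a => ψ.mem_ker.1 (hrange ▸ ⟨a, rfl⟩)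
    refine ⟨XModHom.ext_iff.2 ⟨hker, hker⟩, fun X u hu => ?_⟩
    obtain ⟨h1, h2⟩ := (conjHom_comp_eq_triv_iff ψ u).1 hu
    refine ⟨conjLift hinj u (fun x => hrange ▸ h1 x) (fun b => hrange ▸ h2 b),
      conjHom_comp_conjLift .., fun v hv => conjHom_comp_cancel hinj ?_⟩
    rw [hv, conjHom_comp_conjLift]

end Conj

section Pullback

variable {N T Q Q' : XMod} {κ : XModHom N T} {α : XModHom T Q}

theorem pbIn_f2_injective (g : XModHom Q' Q) (h : XModHom.comp α κ = XModHom.triv N Q)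
    (hκ : Function.Injective κ.f2) : Function.Injective (pbIn κ α g h).f2 :=
  fun _ _ hab => hκ (congrArg (fun p : pbG α g => p.1.1) hab)

theorem range_pbIn_f2 (g : XModHom Q' Q) (h : XModHom.comp α κ = XModHom.triv N Q)
    (hκ : κ.f2.range = α.f2.ker) : (pbIn κ α g h).f2.range = (pbSnd α g).f2.ker := by
  ext ⟨⟨t, q⟩, htq⟩
  constructor
  · rintro ⟨n, hn⟩
    exact congrArg (fun p : pbG α g => p.1.2) hn.symm
  · intro (hq : q = 1)
    subst hq
    obtain ⟨n, rfl⟩ : t ∈ κ.f2.range := hκ ▸ htq.trans (map_one g.f2)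
    exact ⟨n, rfl⟩

theorem pbSnd_f2_surjective (g : XModHom Q' Q) (hα : Function.Surjective α.f2) :
    Function.Surjective (pbSnd α g).f2 := fun q =>
  let ⟨t, ht⟩ := hα (g.f2 q)
  ⟨⟨(t, q), ht⟩, rfl⟩

end Pullback

theorem IFun_map_isPullbackSquare {T Q Q' : XMod} (α : XModHom T Q) (g : XModHom Q' Q) :
    IsPullbackSquare (IFun.map (pbFst α g)) (IFun.map (pbSnd α g)) (IFun.map α)
      (IFun.map g) := by
  refine ⟨XModHom.ext_iff.2 ⟨fun p => p.2, fun p => p.2⟩, fun W u v huv => ?_⟩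
  obtain ⟨huv1, huv2⟩ := XModHom.ext_iff.1 huv
  refine ⟨⟨(u.f1.prod v.f1).codRestrict _ huv1, (u.f2.prod v.f2).codRestrict _ huv2,
      fun x => Subtype.ext (Prod.ext (u.comm_d x) (v.comm_d x)),
      fun b x => Subtype.ext (Prod.ext (u.equiv b x) (v.equiv b x))⟩,
    ⟨rfl, rfl⟩, ?_⟩
  rintro w ⟨rfl, rfl⟩
  rfl

theorem IFun_not_regEpiLoc : ¬ IFun.RegEpiLoc := fun h =>
  have : Subsingleton (Multiplicative ℤ) := (h (XMod.ofGroup (Multiplicative ℤ))).1.subsingleton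
  not_subsingleton (Multiplicative ℤ) this

theorem IFun_conditionallyFlat : IFun.ConditionallyFlat := by
  intro N T Q κ α hse hflat Q' g
  -- `IFun.map f` is definitionally `conjHom f.f2`.
  obtain ⟨hinj, hrange⟩ := isKernelOf_conjHom_iff.1 hflat.1
  have hsurj := pbSnd_f2_surjective g hse.2.2
  exact ⟨isKernelOf_conjHom_iff.2
    ⟨pbIn_f2_injective g hse.1.1 hinj, range_pbIn_f2 g hse.1.1 hrange⟩, hsurj, hsurj⟩

theorem IFun_admissible : IFun.Admissible := fun _ Q α _ =>
  IFun_map_isPullbackSquare α (IFun.ell Q)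

/-- The localization functor `I : XMod → XMod` (constructed
above), sending `(N₁, N₂, ∂)` to `(N₂, N₂, id)` with coaugmentation
`(∂, id)`, is not a regular-epi localization but is conditionally flat, and
hence admissible for the class of regular epimorphisms. -/
theorem IFun_not_regepi_but_conditionally_flat :
    ¬ IFun.RegEpiLoc ∧ IFun.ConditionallyFlat ∧ IFun.Admissible :=
  ⟨IFun_not_regEpiLoc, IFun_conditionallyFlat, IFun_admissible⟩
end

section
/- The abelianization localization functor Ab on XMod is not a nullification functor: there is no crossed module A such that, for every crossed module T, the only morphism A → T is trivial if and only if T is Ab-local (i.e. T₂ is abelian and the action of T₂ on T₁ is trivial). -/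
set_option linter.unusedVariables false

/-! Both `(1, ℤ, 1)` and `(ℤ/3, 1, 1)` are `Ab`-local, hence would be `A`-null. A morphism from
`A` into a crossed module `(M, G, 1)` is trivial on level 2 as soon as `(1, G, 1)` is `A`-null,
and is then an equivariant map into `(M, 1, 1)` on level 1. So `(ℤ/3, ℤ, 1)`, with `ℤ` acting by
inversion, would be `A`-null as well, although its action is not trivial. -/

namespace XMod

-- With trivial boundary the Peiffer identity forces `M` to be abelian.
def ofAction {M G : Type} [CommGroup M] [Group G] (ρ : G →* MulAut M) : XMod where
  M := M
  G := G
  act := ρ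
  d := 1
  act_d _ _ := by simp
  peiffer t s := by simp [mul_inv_cancel_comm]

theorem aNull_ofAction {A : XMod} {M G : Type} [CommGroup M] [Group G]
    (hG : ANull A (ofAction (1 : G →* MulAut PUnit)))
    (hM : ANull A (ofAction (1 : PUnit →* MulAut M))) (ρ : G →* MulAut M) :
    ANull A (ofAction ρ) := by
  intro φ
  have hf2 : φ.f2 = 1 := congrArg XModHom.f2 (hG ⟨1, φ.f2, φ.comm_d, fun _ _ => rfl⟩)
  have hinv : ∀ b n, φ.f1 (A.act b n) = φ.f1 n := fun b n => by
    simpa [hf2] using φ.equiv b n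
  have hf1 : φ.f1 = 1 := congrArg XModHom.f1 (hM ⟨φ.f1, 1, fun _ => rfl, hinv⟩)
  exact XModHom.ext hf1 hf2

end XMod

open XMod in
/-- The abelianization localization functor on `XMod` is not
a nullification functor: there is no crossed module `A` such that a crossed
module `T` is `A`-null exactly when `T` is `Ab`-local (i.e. `T₂` is abelian and
the action of `T₂` on `T₁` is trivial). -/
theorem abelianization_not_nullification :
    ¬ ∃ A : XMod, ∀ T : XMod,
        ANull A T ↔
          ((∀ a b : T.G, a * b = b * a) ∧ ∀ (b : T.G) (t : T.M), T.act b t = t) := by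
  rintro ⟨A, h⟩
  have hG : ANull A (ofAction (1 : Multiplicative ℤ →* MulAut PUnit)) :=
    (h _).mpr ⟨mul_comm (G := Multiplicative ℤ), fun _ _ => rfl⟩
  have hM : ANull A (ofAction (1 : PUnit →* MulAut (Multiplicative (ZMod 3)))) :=
    (h _).mpr ⟨fun _ _ => rfl, fun _ _ => rfl⟩
  have hinv : zpowersHom _ (MulEquiv.inv (Multiplicative (ZMod 3))) (.ofAdd 1) (.ofAdd 1) =
      .ofAdd 1 :=
    ((h _).mp (aNull_ofAction hG hM (zpowersHom _ (MulEquiv.inv _)))).2 _ _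
  rw [zpowersHom_apply, toAdd_ofAdd, zpow_one, MulEquiv.inv_apply] at hinv
  exact absurd hinv (by decide)
end

section
/- Let r : ℤ → ℤ/2ℤ be reduction modulo 2 and φ : ℤ/4ℤ → ℤ/2ℤ the canonical projection. Then the pullback group ℤ ×_{ℤ/2ℤ} ℤ/4ℤ = {(n, c) ∈ ℤ × ℤ/4ℤ : r(n) = φ(c)} is isomorphic to ℤ × ℤ/2ℤ. -/
/-- The pullback of the reduction `r : ℤ → ℤ/2ℤ` and the canonical projection
`φ : ℤ/4ℤ → ℤ/2ℤ`, as an additive subgroup of `ℤ × ℤ/4ℤ`. -/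
def pullbackZ : AddSubgroup (ℤ × ZMod 4) where
  carrier := {p | (p.1 : ZMod 2) = ZMod.castHom (by norm_num : (2 : ℕ) ∣ 4) (ZMod 2) p.2}
  zero_mem' := by simp
  add_mem' := by
    intro a b ha hb
    simp only [Set.mem_setOf_eq, Prod.fst_add, Prod.snd_add, Int.cast_add, map_add] at *
    rw [ha, hb]
  neg_mem' := by
    intro a ha
    simp only [Set.mem_setOf_eq, Prod.fst_neg, Prod.snd_neg, Int.cast_neg, map_neg] at *
    rw [ha]

/-- The embedding `ℤ/2ℤ → ℤ/4ℤ`, `t ↦ 2 * t`. -/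
def gHom : ZMod 2 →+ ZMod 4 where
  toFun t := 2 * t.val
  map_zero' := rfl
  map_add' := by decide

lemma gHom_inj : Function.Injective gHom := by decide

lemma gHom_cast (t : ZMod 2) :
    ZMod.castHom (by norm_num : (2 : ℕ) ∣ 4) (ZMod 2) (gHom t) = 0 := by
  revert t; decide

lemma gHom_surj_ker (d : ZMod 4)
    (hd : ZMod.castHom (by norm_num : (2 : ℕ) ∣ 4) (ZMod 2) d = 0) :
    ∃ t, gHom t = d := by
  revert hd; revert d; decide

/-- The homomorphism `ℤ × ℤ/2ℤ → ℤ × ℤ/4ℤ`, `(n, t) ↦ (n, n + 2t)`. -/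
def hHom : ℤ × ZMod 2 →+ ℤ × ZMod 4 where
  toFun p := (p.1, (p.1 : ZMod 4) + gHom p.2)
  map_zero' := by simp
  map_add' p q := by
    simp only [Prod.fst_add, Prod.snd_add, Int.cast_add, map_add, Prod.mk_add_mk]
    ring_nf

lemma hHom_mem (p : ℤ × ZMod 2) : hHom p ∈ pullbackZ := by
  show ((p.1 : ℤ) : ZMod 2) = ZMod.castHom _ (ZMod 2) ((p.1 : ZMod 4) + gHom p.2)
  rw [map_add, gHom_cast, add_zero]
  simp

/-- The pullback group `ℤ ×_{ℤ/2ℤ} ℤ/4ℤ` of the mod-2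
reduction `ℤ → ℤ/2ℤ` and the canonical projection `ℤ/4ℤ → ℤ/2ℤ` is isomorphic
to `ℤ × ℤ/2ℤ`. -/
theorem pullbackZ_iso : Nonempty (↥pullbackZ ≃+ ℤ × ZMod 2) := by
  refine ⟨(AddEquiv.ofBijective (hHom.codRestrict pullbackZ hHom_mem) ⟨?_, ?_⟩).symm⟩
  · intro p q h
    have h1 : (hHom p : ℤ × ZMod 4) = hHom q := congrArg Subtype.val h
    have hfst : p.1 = q.1 := congrArg (fun x => x.1) h1
    have hsnd : (p.1 : ZMod 4) + gHom p.2 = (q.1 : ZMod 4) + gHom q.2 :=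
      congrArg (fun x => x.2) h1
    rw [hfst, add_right_inj] at hsnd
    exact Prod.ext hfst (gHom_inj hsnd)
  · rintro ⟨⟨n, c⟩, hc⟩
    have hc' : ((n : ZMod 2)) = ZMod.castHom (by norm_num : (2 : ℕ) ∣ 4) (ZMod 2) c := hc
    have hker : ZMod.castHom (by norm_num : (2 : ℕ) ∣ 4) (ZMod 2) (c - (n : ZMod 4)) = 0 := by
      rw [map_sub, ← hc']
      simp
    obtain ⟨t, ht⟩ := gHom_surj_ker _ hker
    refine ⟨(n, t), ?_⟩
    apply Subtype.ext
    show ((n : ℤ), (n : ZMod 4) + gHom t) = (n, c)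
    rw [ht]
    simp
end
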